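/- For every integer i ≥ 1, the sum over all pairs of natural numbers (k, l) with k + 2l = i of (−1)^l · 2^k · ( C(k+l, k) + C(k+l−1, k) ) equals 2. -/
import Mathlib


/-- Integer binomial coefficient `C(a,b)` with the convention that it is `0`
whenever `a < 0` or `b < 0` (and, via `Nat.choose`, whenever `b > a`). -/
def intChoose (a b : ℤ) : ℤ :=
  if 0 ≤ a ∧ 0 ≤ b then (Nat.choose a.toNat b.toNat : ℤ) else 0

lemma intChoose_natCast (a b : ℕ) : intChoose (a : ℤ) (b : ℤ) = (a.choose b : ℤ) := by
  simp [intChoose]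

lemma intChoose_natCast_sub_one (a b : ℕ) (ha : 1 ≤ a) :
    intChoose ((a : ℤ) - 1) (b : ℤ) = ((a - 1).choose b : ℤ) := by
  have h : ((a : ℤ) - 1) = ((a - 1 : ℕ) : ℤ) := by omega
  rw [h, intChoose_natCast]

/-- Chebyshev-like sum `U j = ∑_l (-1)^l 2^(j-2l) C(j-l, l)`. -/
def chebU (j : ℕ) : ℤ :=
  ∑ l ∈ Finset.range (j / 2 + 1), (-1 : ℤ) ^ l * 2 ^ (j - 2 * l) * ((j - l).choose l : ℤ)

lemma chebU_zero : chebU 0 = 1 := by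
  simp [chebU]

lemma chebU_one : chebU 1 = 2 := by
  simp [chebU]

lemma chebU_rec (j : ℕ) : chebU (j + 2) = 2 * chebU (j + 1) - chebU j := by
  have hdiv : (j + 2) / 2 = j / 2 + 1 := by omega
  have hLHS : chebU (j + 2) =
      (∑ l ∈ Finset.range (j / 2 + 1),
        (-((-1 : ℤ) ^ l * 2 ^ (j - 2 * l) * ((j - l).choose l : ℤ))
          + (-1 : ℤ) ^ (l + 1) * 2 ^ (j - 2 * l) * ((j - l).choose (l + 1) : ℤ)))
      + 2 ^ (j + 2) := by
    rw [chebU, hdiv, Finset.sum_range_succ']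
    congr 1
    · apply Finset.sum_congr rfl
      intro l hl
      have hlj : l ≤ j / 2 := by simpa [Nat.lt_succ_iff] using hl
      have h2 : j + 2 - 2 * (l + 1) = j - 2 * l := by omega
      have h3 : j + 2 - (l + 1) = (j - l) + 1 := by omega
      rw [h2, h3, Nat.choose_succ_succ]
      push_cast
      ring
    · norm_num
  have hR : 2 * chebU (j + 1) =
      (∑ l ∈ Finset.range ((j + 1) / 2),
        (-1 : ℤ) ^ (l + 1) * 2 ^ (j - 2 * l) * ((j - l).choose (l + 1) : ℤ))
      + 2 ^ (j + 2) := by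
    rw [chebU, Finset.sum_range_succ', mul_add, Finset.mul_sum]
    congr 1
    · apply Finset.sum_congr rfl
      intro l hl
      have hlj : l < (j + 1) / 2 := by simpa using hl
      have h2 : j - 2 * l = (j + 1 - 2 * (l + 1)) + 1 := by omega
      have h3 : j + 1 - (l + 1) = j - l := by omega
      rw [h2, h3, pow_succ]
      ring
    · norm_num; ring
  have hext : ∑ l ∈ Finset.range ((j + 1) / 2),
        (-1 : ℤ) ^ (l + 1) * 2 ^ (j - 2 * l) * ((j - l).choose (l + 1) : ℤ)
      = ∑ l ∈ Finset.range (j / 2 + 1),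
        (-1 : ℤ) ^ (l + 1) * 2 ^ (j - 2 * l) * ((j - l).choose (l + 1) : ℤ) := by
    apply Finset.sum_subset
    · apply Finset.range_subset_range.mpr; omega
    · intro l _ hl
      have : j - l < l + 1 := by
        simp only [Finset.mem_range, not_lt] at hl; omega
      rw [Nat.choose_eq_zero_of_lt this]
      ring
  rw [hLHS, Finset.sum_add_distrib, hR, hext, Finset.sum_neg_distrib]
  rw [show chebU j = ∑ l ∈ Finset.range (j / 2 + 1),
      (-1 : ℤ) ^ l * 2 ^ (j - 2 * l) * ((j - l).choose l : ℤ) from rfl]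
  ring

lemma chebU_val (j : ℕ) : chebU j = j + 1 := by
  induction j using Nat.strong_induction_on with
  | _ j ih =>
    match j with
    | 0 => simpa using chebU_zero
    | 1 => simpa using chebU_one
    | (n + 2) =>
      rw [chebU_rec, ih (n + 1) (by omega), ih n (by omega)]
      push_cast
      ring

/-- Second Chebyshev-like sum `W i = ∑_l (-1)^l 2^(i-2l) C(i-l-1, i-2l)`. -/
def chebW (i : ℕ) : ℤ :=
  ∑ l ∈ Finset.range (i / 2 + 1), (-1 : ℤ) ^ l * 2 ^ (i - 2 * l) * ((i - l - 1).choose (i - 2 * l) : ℤ)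

lemma chebW_one : chebW 1 = 0 := by
  simp [chebW]

lemma chebW_succ_succ (m : ℕ) : chebW (m + 2) = -chebU m := by
  have hdiv : (m + 2) / 2 = m / 2 + 1 := by omega
  rw [chebW, hdiv, Finset.sum_range_succ']
  have h0 : (-1 : ℤ) ^ 0 * 2 ^ (m + 2 - 2 * 0) * ((m + 2 - 0 - 1).choose (m + 2 - 2 * 0) : ℤ) = 0 := by
    rw [Nat.choose_eq_zero_of_lt (by omega)]
    ring
  rw [h0, add_zero, chebU, ← Finset.sum_neg_distrib]
  apply Finset.sum_congr rfl
  intro l hl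
  have hlj : l ≤ m / 2 := by simpa [Nat.lt_succ_iff] using hl
  have h2 : m + 2 - 2 * (l + 1) = m - 2 * l := by omega
  have h3 : m + 2 - (l + 1) - 1 = m - l := by omega
  have h4 : (m - l).choose (m - 2 * l) = (m - l).choose l := by
    have : m - l = (m - 2 * l) + l := by omega
    rw [this, Nat.choose_symm_add, ← this]
  rw [h2, h3, h4, pow_succ]
  ring

lemma sum_eq_chebs (i : ℕ) (hi : 1 ≤ i) :
    (∑ p ∈ (Finset.range (i + 1) ×ˢ Finset.range (i + 1)).filter
        (fun p => p.1 + 2 * p.2 = i),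
      (-1 : ℤ) ^ p.2 * 2 ^ p.1 *
        (intChoose ((p.1 : ℤ) + (p.2 : ℤ)) (p.1 : ℤ) +
         intChoose ((p.1 : ℤ) + (p.2 : ℤ) - 1) (p.1 : ℤ))) = chebU i + chebW i := by
  rw [chebU, chebW, ← Finset.sum_add_distrib]
  apply Finset.sum_nbij' (fun p => p.2) (fun l => (i - 2 * l, l))
  · intro p hp
    simp only [Finset.mem_filter, Finset.mem_product, Finset.mem_range] at hp
    simp only [Finset.mem_range]
    omega
  · intro l hl
    simp only [Finset.mem_range] at hl
    simp only [Finset.mem_filter, Finset.mem_product, Finset.mem_range]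
    omega
  · intro p hp
    simp only [Finset.mem_filter, Finset.mem_product, Finset.mem_range] at hp
    have : i - 2 * p.2 = p.1 := by omega
    simp [this]
  · intro l hl
    rfl
  · intro p hp
    simp only [Finset.mem_filter, Finset.mem_product, Finset.mem_range] at hp
    obtain ⟨⟨hk, hl⟩, hsum⟩ := hp
    set k := p.1
    set l := p.2
    have hkl1 : 1 ≤ k + l := by omega
    have e1 : intChoose ((k : ℤ) + (l : ℤ)) (k : ℤ) = ((k + l).choose k : ℤ) := by
      rw [show (k : ℤ) + (l : ℤ) = ((k + l : ℕ) : ℤ) by push_cast; ring, intChoose_natCast]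
    have e2 : intChoose ((k : ℤ) + (l : ℤ) - 1) (k : ℤ) = ((k + l - 1).choose k : ℤ) := by
      rw [show (k : ℤ) + (l : ℤ) = ((k + l : ℕ) : ℤ) by push_cast; ring,
        intChoose_natCast_sub_one _ _ hkl1]
    have h1 : i - l = k + l := by omega
    have h2 : i - 2 * l = k := by omega
    have h3 : i - l - 1 = k + l - 1 := by omega
    have h4 : (k + l).choose l = (k + l).choose k := by
      rw [Nat.add_comm k l, Nat.choose_symm_add]
    rw [e1, e2, h1, h2, h4]
    ring

/-- For every integer `i ≥ 1`,
`∑_{k+2l=i} (−1)^l 2^k (C(k+l,k) + C(k+l−1,k)) = 2`. -/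
theorem sum_total_coefficient_eq_two (i : ℕ) (hi : 1 ≤ i) :
    (∑ p ∈ (Finset.range (i + 1) ×ˢ Finset.range (i + 1)).filter
        (fun p => p.1 + 2 * p.2 = i),
      (-1 : ℤ) ^ p.2 * 2 ^ p.1 *
        (intChoose ((p.1 : ℤ) + (p.2 : ℤ)) (p.1 : ℤ) +
         intChoose ((p.1 : ℤ) + (p.2 : ℤ) - 1) (p.1 : ℤ))) = 2 := by
  rw [sum_eq_chebs i hi]
  match i, hi with
  | 1, _ => rw [chebU_one, chebW_one]; norm_num
  | (m + 2), _ =>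
    rw [chebW_succ_succ, chebU_val, chebU_val]
    push_cast
    ring
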